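/- arXiv:2402.16625 — 3 statements merged into one kernel-verified Lean document; each statement's English description precedes it below -/
import Mathlib

section
/- Let p be a prime and λ, μ integer partitions with G_λ = ⊕_i ℤ/p^{λ_i}ℤ and G_μ = ⊕_i ℤ/p^{μ_i}ℤ. If there exists a surjective group homomorphism from G_λ onto G_μ, then μ_i ≤ λ_i for all i (equivalently μ ⊆ λ as Ferrers diagrams). -/
open Finset Function

/-- Conjugate partition, 0-indexed: `conj f i = λ'_{i+1} = #{j : f j ≥ i+1}`. -/
noncomputable def conj (f : ℕ → ℕ) (i : ℕ) : ℕ := Nat.card {j : ℕ | i + 1 ≤ f j}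

/-- `|λ| = Σ_i λ_i`. -/
noncomputable def psize (f : ℕ → ℕ) : ℕ := ∑ᶠ i, f i

/-- `n(λ) = Σ_{i ≥ 1} (i-1)·λ_i`, written with 0-indexed parts. -/
noncomputable def nstat (f : ℕ → ℕ) : ℕ := ∑ᶠ i, i * f i

/-- An integer partition: a weakly decreasing, eventually zero sequence of naturals. -/
def IsPartition (f : ℕ → ℕ) : Prop := Antitone f ∧ ∃ N, ∀ i ≥ N, f i = 0

/-- q-Pochhammer symbol `(a;q)_n`. -/
def qPoch (a q : ℝ) (n : ℕ) : ℝ := ∏ k ∈ Finset.range n, (1 - a * q ^ k)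

/-- q-binomial coefficient `[a choose b]_q`. -/
noncomputable def qBinom (q : ℝ) (a b : ℕ) : ℝ := qPoch q q a / (qPoch q q b * qPoch q q (a - b))

/-- The abelian p-group `G_λ = ⊕_i ℤ/p^{λ_i}ℤ`. -/
abbrev GrpP (p : ℕ) (f : ℕ → ℕ) : Type := DirectSum ℕ (fun i => ZMod (p ^ f i))

/-- The number of surjective additive group homomorphisms `A → B`. -/
noncomputable def numSur (A B : Type) [AddCommGroup A] [AddCommGroup B] : ℕ :=
  Nat.card {φ : A →+ B // Function.Surjective φ}

/-- Multiplication by `m` as an additive hom. -/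
def smulHom (m : ℕ) (A : Type*) [AddCommGroup A] : A →+ A where
  toFun x := m • x
  map_zero' := smul_zero m
  map_add' := smul_add m

abbrev SG (m : ℕ) (A : Type*) [AddCommGroup A] : AddSubgroup A := (smulHom m A).range

lemma mem_SG {m : ℕ} {A : Type*} [AddCommGroup A] {x : A} :
    x ∈ SG m A ↔ ∃ y, m • y = x := Iff.rfl

lemma SG_mul_le (m q : ℕ) (A : Type*) [AddCommGroup A] : SG (m * q) A ≤ SG m A := by
  rintro x ⟨y, rfl⟩
  exact ⟨q • y, (smul_smul m q y)⟩

/-- The key quotient `p^k A / p^{k+1} A` (generalized). -/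
abbrev QG (m q : ℕ) (A : Type*) [AddCommGroup A] :=
  SG m A ⧸ (SG (m * q) A).addSubgroupOf (SG m A)

lemma card_QG_le {A B : Type*} [AddCommGroup A] [AddCommGroup B] [Finite A]
    (ψ : A →+ B) (hψ : Surjective ψ) (m q : ℕ) :
    Nat.card (QG m q B) ≤ Nat.card (QG m q A) := by
  have hmap : ∀ (n : ℕ) (x : A), x ∈ SG n A → ψ x ∈ SG n B := by
    rintro n x ⟨y, rfl⟩
    exact ⟨ψ y, (map_nsmul ψ n y).symm⟩
  let res : ↥(SG m A) →+ ↥(SG m B) :=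
    AddMonoidHom.codRestrict (ψ.comp (SG m A).subtype) _ (fun x => hmap m x.1 x.2)
  have hres : Surjective res := by
    rintro ⟨b, y, rfl⟩
    obtain ⟨a, rfl⟩ := hψ y
    exact ⟨⟨m • a, ⟨a, rfl⟩⟩, Subtype.ext (map_nsmul ψ m a)⟩
  let F0 : ↥(SG m A) →+ QG m q B :=
    (QuotientAddGroup.mk' ((SG (m * q) B).addSubgroupOf (SG m B))).comp res
  have hker : (SG (m * q) A).addSubgroupOf (SG m A) ≤ F0.ker := by
    intro x hx
    have : ψ x.1 ∈ SG (m * q) B := hmap _ x.1 hx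
    simp only [F0, AddMonoidHom.mem_ker, AddMonoidHom.comp_apply,
      QuotientAddGroup.mk'_apply, QuotientAddGroup.eq_zero_iff]
    exact this
  let F : QG m q A →+ QG m q B := QuotientAddGroup.lift _ F0 hker
  have hF : Surjective F := by
    intro z
    obtain ⟨w, rfl⟩ := QuotientAddGroup.mk'_surjective _ z
    obtain ⟨x, hx⟩ := hres w
    exact ⟨QuotientAddGroup.mk' _ x, by simp [F, F0, hx]⟩
  exact Nat.card_le_card_of_surjective F hF

lemma card_SG_pi {ι : Type*} [Fintype ι] (M : ι → Type*) [∀ i, AddCommGroup (M i)] (m : ℕ) :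
    Nat.card (SG m (∀ i, M i)) = ∏ i, Nat.card (SG m (M i)) := by
  rw [← Nat.card_pi]
  refine Nat.card_congr ⟨fun x i => ⟨x.1 i, ?_⟩, fun v => ⟨fun i => (v i).1, ?_⟩, ?_, ?_⟩
  · obtain ⟨y, hy⟩ := x.2
    exact ⟨y i, congrFun hy i⟩
  · choose y hy using fun i => (v i).2
    exact ⟨y, funext hy⟩
  · intro x; rfl
  · intro v; rfl

lemma card_SG_zmod (M : ℕ) (hM : M ≠ 0) (m : ℕ) :
    Nat.card (SG m (ZMod M)) = M / Nat.gcd M m := by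
  haveI : NeZero M := ⟨hM⟩
  have h : SG m (ZMod M) = AddSubgroup.zmultiples ((m : ZMod M)) := by
    apply le_antisymm
    · rintro x ⟨y, rfl⟩
      refine AddSubgroup.mem_zmultiples_iff.mpr ⟨(y.val : ℤ), ?_⟩
      show (y.val : ℤ) • (m : ZMod M) = m • y
      rw [natCast_zsmul, nsmul_eq_mul, nsmul_eq_mul, ZMod.natCast_val, ZMod.cast_id,
        mul_comm]
    · refine AddSubgroup.zmultiples_le_of_mem ⟨1, ?_⟩
      show m • (1 : ZMod M) = (m : ZMod M)
      rw [nsmul_eq_mul, mul_one]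
  rw [h, Nat.card_zmultiples, ZMod.addOrderOf_coe m hM]

lemma card_SG_zmod_pow {p : ℕ} (hp : p.Prime) (n k : ℕ) :
    Nat.card (SG (p ^ k) (ZMod (p ^ n))) = p ^ (n - min n k) := by
  rw [card_SG_zmod _ (pow_ne_zero n hp.ne_zero)]
  rcases le_total n k with h | h
  · rw [Nat.gcd_eq_left (pow_dvd_pow p h), Nat.div_self (Nat.pow_pos hp.pos), min_eq_left h, Nat.sub_self, pow_zero]
  · rw [Nat.gcd_eq_right (pow_dvd_pow p h), Nat.pow_div h hp.pos, min_eq_right h]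

lemma card_SG_eq_card_QG_mul {A : Type*} [AddCommGroup A] (m q : ℕ) :
    Nat.card (SG m A) = Nat.card (QG m q A) * Nat.card (SG (m * q) A) := by
  rw [AddSubgroup.card_eq_card_quotient_mul_card_addSubgroup
    ((SG (m * q) A).addSubgroupOf (SG m A))]
  congr 1
  exact Nat.card_congr (AddSubgroup.addSubgroupOfEquivOfLe (SG_mul_le m q A)).toEquiv

/-- Cardinality of `SG (p^k)` on a finite product of `ZMod (p ^ f i)`. -/
lemma card_SG_prod {p : ℕ} (hp : p.Prime) (N : ℕ) (f : ℕ → ℕ) (k : ℕ) :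
    Nat.card (SG (p ^ k) (∀ i : Fin N, ZMod (p ^ f i.val))) =
      p ^ (∑ i : Fin N, (f i.val - min (f i.val) k)) := by
  rw [card_SG_pi]
  rw [Finset.prod_congr rfl (fun i _ => card_SG_zmod_pow hp (f i.val) k)]
  exact Finset.prod_pow_eq_pow_sum _ _ _

lemma sum_split (f : ℕ → ℕ) (N k : ℕ) :
    (∑ i : Fin N, (f i.val - min (f i.val) k)) =
      (Finset.univ.filter fun i : Fin N => k + 1 ≤ f i.val).card
        + ∑ i : Fin N, (f i.val - min (f i.val) (k + 1)) := by
  rw [Finset.card_filter, ← Finset.sum_add_distrib]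
  refine Finset.sum_congr rfl fun i _ => ?_
  rcases le_or_gt (k + 1) (f i.val) with h | h
  · rw [if_pos h, min_eq_right h, min_eq_right (le_trans (Nat.le_succ k) h)]
    omega
  · have h' : f i.val ≤ k := Nat.lt_succ_iff.mp h
    rw [if_neg (by omega), min_eq_left h', min_eq_left (by omega)]; omega

lemma card_QG_prod {p : ℕ} (hp : p.Prime) (N : ℕ) (f : ℕ → ℕ) (k : ℕ) :
    Nat.card (QG (p ^ k) p (∀ i : Fin N, ZMod (p ^ f i.val))) =
      p ^ (Finset.univ.filter fun i : Fin N => k + 1 ≤ f i.val).card := by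
  have h := card_SG_eq_card_QG_mul (A := ∀ i : Fin N, ZMod (p ^ f i.val)) (p ^ k) p
  rw [card_SG_prod hp, ← pow_succ, card_SG_prod hp, sum_split f N k, pow_add] at h
  have hpos : 0 < p ^ (∑ i : Fin N, (f i.val - min (f i.val) (k + 1))) :=
    Nat.pow_pos hp.pos
  exact (Nat.eq_of_mul_eq_mul_right hpos h.symm)

section transfer

variable (p : ℕ) (f : ℕ → ℕ) (N : ℕ)

/-- Projection from the direct sum to a finite product. -/
def proj : DirectSum ℕ (fun i => ZMod (p ^ f i)) →+ (∀ i : Fin N, ZMod (p ^ f i.val)) where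
  toFun x := fun i => x i.val
  map_zero' := rfl
  map_add' := fun x y => rfl

/-- Section from the finite product into the direct sum. -/
noncomputable def sect : (∀ i : Fin N, ZMod (p ^ f i.val)) →+ DirectSum ℕ (fun i => ZMod (p ^ f i)) :=
  ∑ i : Fin N, (DirectSum.of (fun j => ZMod (p ^ f j)) i.val).comp
    (Pi.evalAddMonoidHom (fun i : Fin N => ZMod (p ^ f i.val)) i)

lemma sect_single (i : Fin N) (b : ZMod (p ^ f i.val)) :
    sect p f N (Pi.single i b) = DirectSum.of (fun j => ZMod (p ^ f j)) i.val b := by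
  rw [sect, AddMonoidHom.finset_sum_apply]
  rw [Finset.sum_eq_single i]
  · simp
  · intro j _ hj
    simp [Pi.single_eq_of_ne hj]
  · simp

lemma sect_surjective (hN : ∀ i ≥ N, f i = 0) : Surjective (sect p f N) := by
  intro x
  induction x using DirectSum.induction_on with
  | zero => exact ⟨0, map_zero _⟩
  | of j b =>
    by_cases h : j < N
    · exact ⟨Pi.single ⟨j, h⟩ b, sect_single p f N ⟨j, h⟩ b⟩
    · haveI : Subsingleton (ZMod (p ^ f j)) := by
        rw [hN j (le_of_not_gt h), pow_zero]
        infer_instance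
      refine ⟨0, ?_⟩
      rw [map_zero, Subsingleton.elim b 0, map_zero]
  | add x y hx hy =>
    obtain ⟨v, hv⟩ := hx; obtain ⟨w, hw⟩ := hy
    exact ⟨v + w, by rw [map_add, hv, hw]⟩

lemma proj_surjective : Surjective (proj p f N) := by
  intro w
  refine ⟨sect p f N w, funext fun i => ?_⟩
  have hw : sect p f N w = ∑ j : Fin N, DirectSum.of (fun j => ZMod (p ^ f j)) j.val (w j) := by
    conv_lhs => rw [show w = ∑ j : Fin N, Pi.single j (w j) from (Finset.univ_sum_single w).symm]
    rw [map_sum]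
    exact Finset.sum_congr rfl fun j _ => sect_single p f N j (w j)
  rw [hw, map_sum, Finset.sum_apply]
  rw [Finset.sum_eq_single i]
  · show (DirectSum.of (fun j => ZMod (p ^ f j)) i.val (w i)) i.val = w i
    exact DirectSum.of_eq_same (β := fun j => ZMod (p ^ f j)) i.val (w i)
  · intro j _ hj
    show (DirectSum.of (fun j => ZMod (p ^ f j)) j.val (w j)) i.val = 0
    exact DirectSum.of_eq_of_ne _ _ _ (fun hv => hj (Fin.val_injective hv.symm))
  · simp

end transfer

/-- if there is a surjective homomorphism `G_λ → G_μ` then `μ_i ≤ λ_i` for all `i`. -/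
theorem surjection_implies_containment (p : ℕ) (hp : p.Prime)
    (f g : ℕ → ℕ) (hf : IsPartition f) (hg : IsPartition g)
    (hsur : ∃ φ : GrpP p f →+ GrpP p g, Function.Surjective φ) :
    ∀ i, g i ≤ f i := by
  obtain ⟨φ, hφ⟩ := hsur
  obtain ⟨hfA, Nf, hNf⟩ := hf
  obtain ⟨hgA, Ng, hNg⟩ := hg
  intro i
  by_contra hlt
  push_neg at hlt
  have hiNg : i < Ng := by
    by_contra h
    have := hNg i (le_of_not_gt h); omega
  haveI : Finite (∀ j : Fin Nf, ZMod (p ^ f j.val)) := by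
    haveI : ∀ j : Fin Nf, NeZero (p ^ f j.val) := fun j => ⟨pow_ne_zero _ hp.ne_zero⟩
    infer_instance
  let ψ := ((proj p g Ng).comp φ).comp (sect p f Nf)
  have hψ : Surjective ψ :=
    (proj_surjective p g Ng).comp (hφ.comp (sect_surjective p f Nf hNf))
  have hcard := card_QG_le ψ hψ (p ^ (f i)) p
  rw [card_QG_prod hp, card_QG_prod hp] at hcard
  have hle := (Nat.pow_le_pow_iff_right hp.one_lt).mp hcard
  have h1 : i + 1 ≤ (Finset.univ.filter fun j : Fin Ng => f i + 1 ≤ g j.val).card := by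
    have hmaps : ∀ j : Fin (i+1), j ∈ (Finset.univ : Finset (Fin (i+1))) →
        (⟨j.val, lt_of_le_of_lt (Nat.lt_succ_iff.mp j.isLt) hiNg⟩ : Fin Ng) ∈
          (Finset.univ.filter fun j : Fin Ng => f i + 1 ≤ g j.val) := by
      intro j _
      refine Finset.mem_filter.mpr ⟨Finset.mem_univ _, ?_⟩
      show f i + 1 ≤ g j.val
      have : g i ≤ g j.val := hgA (Nat.lt_succ_iff.mp j.isLt)
      omega
    have := Finset.card_le_card_of_injOn _ hmaps (by
      intro a _ b _ hab
      exact Fin.ext (congrArg (fun x : Fin Ng => x.val) hab))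
    simpa using this
  have h2 : (Finset.univ.filter fun j : Fin Nf => f i + 1 ≤ f j.val).card ≤ i := by
    have hmaps : ∀ j : Fin Nf, j ∈ (Finset.univ.filter fun j : Fin Nf => f i + 1 ≤ f j.val) →
        j.val ∈ Finset.range i := by
      intro j hj
      obtain ⟨-, hj⟩ := Finset.mem_filter.mp hj
      refine Finset.mem_range.mpr ?_
      by_contra h
      have : f j.val ≤ f i := hfA (le_of_not_gt h)
      omega
    have := Finset.card_le_card_of_injOn _ hmaps (by
      intro a _ b _ hab
      exact Fin.val_injective hab)
    simpa using this
  omega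
end

section
/- Let 0 < t < 1, u a real number, and λ a partition with at most n nonzero parts. Then the Hall-Littlewood polynomial in n variables evaluated at the principal specialization satisfies P_λ(u, ut, ..., ut^{n−1}; 0, t) = u^{|λ|} t^{n(λ)} (t;t)_n / ((t;t)_{n−ℓ(λ)} Π_{i≥1} (t;t)_{m_i(λ)}), where ℓ(λ) is the number of nonzero parts, n(λ) = Σ_i (i−1)λ_i, and m_i(λ) is the multiplicity of part i. -/
open Finset

/-- `v_m(t) = Π_{k=1}^m (1−t^k)/(1−t)`. -/
noncomputable def vFactor (t : ℝ) (m : ℕ) : ℝ := ∏ k ∈ Finset.range m, (1 - t ^ (k + 1)) / (1 - t)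

/-- The normalization `v_λ(t) = v_{m_0}(t) Π_{i≥1} v_{m_i(λ)}(t)` with `m_0 = n − ℓ(λ)`. -/
noncomputable def vlam (n : ℕ) (t : ℝ) (lam : ℕ → ℕ) : ℝ :=
  vFactor t (n - conj lam 0) * ∏ᶠ i : ℕ, vFactor t (conj lam i - conj lam (i + 1))

/-- The Hall-Littlewood polynomial in `n` variables,
`P_λ(x; 0, t) = v_λ(t)⁻¹ Σ_{σ ∈ S_n} σ(x^λ Π_{i<j} (x_i − t x_j)/(x_i − x_j))`. -/
noncomputable def hlPoly (n : ℕ) (t : ℝ) (lam : ℕ → ℕ) (x : Fin n → ℝ) : ℝ :=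
  (1 / vlam n t lam) *
    ∑ σ : Equiv.Perm (Fin n),
      (∏ i : Fin n, x (σ i) ^ lam (i : ℕ)) *
        ∏ i : Fin n, ∏ j : Fin n,
          if (i : ℕ) < (j : ℕ) then (x (σ i) - t * x (σ j)) / (x (σ i) - x (σ j)) else 1

section aux
variable {t u : ℝ}

lemma one_sub_pow_pos (ht0 : 0 < t) (ht1 : t < 1) (k : ℕ) (hk : 1 ≤ k) : 0 < 1 - t ^ k :=
  sub_pos.mpr (pow_lt_one₀ ht0.le ht1 (by omega))

lemma tel_prod (ht0 : 0 < t) (ht1 : t < 1) (hu : u ≠ 0) (n : ℕ) :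
    ∀ m ≤ n, ∏ i ∈ Finset.range m, ((u*t^i - t*(u*t^n))/(u*t^i - u*t^n))
      = (1 - t^(n+1))/(1 - t^(n+1-m)) := by
  intro m hm
  induction m with
  | zero => rw [Finset.prod_range_zero, Nat.sub_zero,
      div_self (one_sub_pow_pos ht0 ht1 _ (by omega)).ne']
  | succ m ih =>
      have hm' : m ≤ n := by omega
      rw [Finset.prod_range_succ, ih hm']
      have h1 : (1:ℝ) - t^(n+1-m) ≠ 0 := (one_sub_pow_pos ht0 ht1 _ (by omega)).ne'
      have h2 : (1:ℝ) - t^(n-m) ≠ 0 := (one_sub_pow_pos ht0 ht1 _ (by omega)).ne'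
      have h3 : (0:ℝ) < t^m := pow_pos ht0 m
      have e1 : t^n = t^m * t^(n-m) := by rw [← pow_add]; congr 1; omega
      have e2 : t*t^n = t^m * t^(n+1-m) := by
        rw [← pow_succ', ← pow_add]; congr 1; omega
      have key : u*t^m - u*t^n = u * t^m * (1 - t^(n-m)) := by
        rw [e1]; ring
      have key2 : u*t^m - t*(u*t^n) = u * t^m * (1 - t^(n+1-m)) := by
        rw [show t*(u*t^n) = u*(t*t^n) by ring, e2]; ring
      rw [key, key2]
      have hnm : n + 1 - (m+1) = n - m := by omega
      rw [hnm]
      field_simp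


lemma vprod (ht0 : 0 < t) (ht1 : t < 1) (hu : u ≠ 0) (n : ℕ) :
    ∏ i ∈ Finset.range n, ∏ j ∈ Finset.range n,
      (if i < j then (u*t^i - t*(u*t^j))/(u*t^i - u*t^j) else 1)
      = vFactor t n := by
  induction n with
  | zero => simp [vFactor]
  | succ n ih =>
      rw [Finset.prod_range_succ]
      have last_row : ∏ j ∈ Finset.range (n+1),
          (if n < j then (u*t^n - t*(u*t^j))/(u*t^n - u*t^j) else 1) = 1 := by
        apply Finset.prod_eq_one
        intro j hj
        rw [Finset.mem_range] at hj
        rw [if_neg (by omega)]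
      rw [last_row, mul_one]
      have split : ∀ i ∈ Finset.range n, (∏ j ∈ Finset.range (n+1),
          (if i < j then (u*t^i - t*(u*t^j))/(u*t^i - u*t^j) else 1))
          = (∏ j ∈ Finset.range n,
          (if i < j then (u*t^i - t*(u*t^j))/(u*t^i - u*t^j) else 1))
            * ((u*t^i - t*(u*t^n))/(u*t^i - u*t^n)) := by
        intro i hi
        rw [Finset.mem_range] at hi
        rw [Finset.prod_range_succ, if_pos hi]
      rw [Finset.prod_congr rfl split, Finset.prod_mul_distrib, ih,
        tel_prod ht0 ht1 hu n n le_rfl]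
      rw [show vFactor t (n+1) = vFactor t n * ((1 - t^(n+1))/(1-t)) by
        rw [vFactor, Finset.prod_range_succ]; rfl]
      rw [show n + 1 - n = 1 by omega, pow_one, vFactor]


lemma perm_exists_descent {n : ℕ} (σ : Equiv.Perm (Fin n)) (hσ : σ ≠ 1) :
    ∃ i j : Fin n, (i : ℕ) < (j : ℕ) ∧ (σ i : ℕ) = (σ j : ℕ) + 1 := by
  by_contra hcon
  push_neg at hcon
  apply hσ
  match n with
  | 0 => exact Subsingleton.elim _ _
  | m + 1 =>
    have hmono : StrictMono (σ⁻¹ : Equiv.Perm (Fin (m+1))) := by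
      rw [Fin.strictMono_iff_lt_succ]
      intro i
      have hval : ((i.succ : Fin (m+1)) : ℕ) = ((i.castSucc : Fin (m+1)) : ℕ) + 1 := rfl
      have hne : σ⁻¹ i.castSucc ≠ σ⁻¹ i.succ := by
        intro h
        have : i.castSucc = i.succ := (Equiv.injective _) h
        exact absurd (congrArg Fin.val this) (by omega)
      rcases lt_or_gt_of_ne hne with h | h
      · exact h
      · exfalso
        have := hcon (σ⁻¹ i.succ) (σ⁻¹ i.castSucc) h
        simp only [Equiv.Perm.inv_def, Equiv.apply_symm_apply] at this
        exact this hval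
    have hid : ⇑(σ⁻¹ : Equiv.Perm (Fin (m+1))) = id := by
      apply (hmono.range_inj strictMono_id).mp
      rw [Set.range_id]
      exact Set.range_eq_univ.mpr (Equiv.surjective _)
    have : σ⁻¹ = (1 : Equiv.Perm (Fin (m+1))) := Equiv.ext fun x => congrFun hid x
    rw [← inv_inv σ, this, inv_one]

lemma antitone_tel_sum {c : ℕ → ℕ} (hc : Antitone c) (M : ℕ) :
    ∑ i ∈ Finset.range M, (c i - c (i+1)) = c 0 - c M := by
  induction M with
  | zero => simp
  | succ M ih =>
      rw [Finset.sum_range_succ, ih]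
      have h1 : c (M+1) ≤ c M := hc (by omega)
      have h2 : c M ≤ c 0 := hc (by omega)
      omega

lemma qPoch_pos {t : ℝ} (ht0 : 0 < t) (ht1 : t < 1) (m : ℕ) : 0 < qPoch t t m := by
  apply Finset.prod_pos
  intro k _
  have : t * t ^ k < 1 := by
    calc t * t ^ k ≤ t * 1 := by
          apply mul_le_mul_of_nonneg_left _ ht0.le
          exact pow_le_one₀ ht0.le ht1.le
      _ < 1 := by linarith
  linarith

lemma vFactor_eq {t : ℝ} (m : ℕ) : vFactor t m = qPoch t t m / (1-t)^m := by
  rw [vFactor, qPoch, Finset.prod_div_distrib, Finset.prod_const,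
    Finset.card_range]
  congr 1
  apply Finset.prod_congr rfl
  intro k _
  rw [← pow_succ']

lemma conj_finite {lam : ℕ → ℕ} (hlam : IsPartition lam) (i : ℕ) :
    {j : ℕ | i + 1 ≤ lam j}.Finite := by
  obtain ⟨N, hN⟩ := hlam.2
  apply Set.Finite.subset (Set.finite_Iio N)
  intro j hj
  simp only [Set.mem_setOf_eq] at hj
  by_contra h
  simp only [Set.mem_Iio, not_lt] at h
  rw [hN j h] at hj; omega

lemma conj_antitone {lam : ℕ → ℕ} (hlam : IsPartition lam) : Antitone (conj lam) := by
  apply antitone_nat_of_succ_le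
  intro i
  rw [conj, conj, Nat.card_coe_set_eq, Nat.card_coe_set_eq]
  apply Set.ncard_le_ncard _ (conj_finite hlam i)
  intro j hj
  simp only [Set.mem_setOf_eq] at *
  omega

lemma conj_eq_zero {lam : ℕ → ℕ} (hlam : IsPartition lam) (i : ℕ) (h : lam 0 ≤ i) :
    conj lam i = 0 := by
  have hempty : {j : ℕ | i + 1 ≤ lam j} = ∅ := by
    ext j
    simp only [Set.mem_setOf_eq, Set.mem_empty_iff_false, iff_false, not_le]
    have := hlam.1 (Nat.zero_le j)
    omega
  rw [conj, hempty, Nat.card_coe_set_eq, Set.ncard_empty]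

lemma lam_eq_zero {lam : ℕ → ℕ} {n : ℕ} (hlam : IsPartition lam)
    (hlen : conj lam 0 ≤ n) : ∀ i ≥ n, lam i = 0 := by
  have hn : lam n = 0 := by
    by_contra h
    have hsub : Set.Iic n ⊆ {j : ℕ | 0 + 1 ≤ lam j} := by
      intro j hj
      simp only [Set.mem_Iic] at hj
      have := hlam.1 hj
      simp only [Set.mem_setOf_eq]
      omega
    have hc := Set.ncard_le_ncard hsub (conj_finite hlam 0)
    rw [← Finset.coe_Iic, Set.ncard_coe_finset, Nat.card_Iic] at hc
    rw [conj, Nat.card_coe_set_eq] at hlen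
    omega
  intro i hi
  have := hlam.1 hi
  omega

end aux

/-- the principal specialization of the Hall-Littlewood polynomial,
`P_λ(u, ut, …, ut^{n−1}; 0, t) = u^{|λ|} t^{n(λ)} (t;t)_n / ((t;t)_{n−ℓ(λ)} Π_{i≥1}(t;t)_{m_i(λ)})`. -/
theorem hl_principal_specialization (n : ℕ) (t u : ℝ) (ht0 : 0 < t) (ht1 : t < 1)
    (hu : u ≠ 0) (lam : ℕ → ℕ) (hlam : IsPartition lam) (hlen : conj lam 0 ≤ n) :
    hlPoly n t lam (fun i => u * t ^ (i : ℕ)) =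
      u ^ psize lam * t ^ nstat lam * qPoch t t n /
        (qPoch t t (n - conj lam 0) *
          ∏ᶠ i : ℕ, qPoch t t (conj lam i - conj lam (i + 1))) := by
  obtain ⟨hanti, hev⟩ := id hlam
  have h1t : (0:ℝ) < 1 - t := by linarith
  -- the sum over permutations reduces to the identity permutation
  rw [hlPoly]
  rw [Finset.sum_eq_single (1 : Equiv.Perm (Fin n))
    (by
      intro σ _ hσ
      obtain ⟨i, j, hij, hval⟩ := perm_exists_descent σ hσ
      apply mul_eq_zero_of_right
      apply Finset.prod_eq_zero (Finset.mem_univ i)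
      apply Finset.prod_eq_zero (Finset.mem_univ j)
      rw [if_pos hij]
      have hz : u * t ^ ((σ i : ℕ)) - t * (u * t ^ ((σ j : ℕ))) = 0 := by
        rw [hval, pow_succ]; ring
      show (u * t ^ ((σ i : ℕ)) - t * (u * t ^ ((σ j : ℕ))))
          / (u * t ^ ((σ i : ℕ)) - u * t ^ ((σ j : ℕ))) = 0
      rw [hz, zero_div])
    (by intro h; exact absurd (Finset.mem_univ 1) h)]
  simp only [Equiv.Perm.one_apply]
  -- monomial part
  have hlz := lam_eq_zero hlam hlen
  have hps : psize lam = ∑ i ∈ Finset.range n, lam i := by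
    apply finsum_eq_sum_of_support_subset
    intro i hi
    simp only [Function.mem_support] at hi
    simp only [Finset.coe_range, Set.mem_Iio]
    by_contra h
    exact hi (hlz i (by omega))
  have hns : nstat lam = ∑ i ∈ Finset.range n, i * lam i := by
    apply finsum_eq_sum_of_support_subset
    intro i hi
    simp only [Function.mem_support] at hi
    simp only [Finset.coe_range, Set.mem_Iio]
    by_contra h
    rw [hlz i (by omega), mul_zero] at hi
    exact hi rfl
  have hmono : (∏ i : Fin n, (u * t ^ ((i : Fin n) : ℕ)) ^ lam ((i : Fin n) : ℕ))
      = u ^ psize lam * t ^ nstat lam := by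
    rw [Fin.prod_univ_eq_prod_range (fun i => (u * t ^ i) ^ lam i) n, hps, hns,
      ← Finset.prod_pow_eq_pow_sum, ← Finset.prod_pow_eq_pow_sum,
      ← Finset.prod_mul_distrib]
    apply Finset.prod_congr rfl
    intro i _
    rw [mul_pow, ← pow_mul]
  -- double product part
  have hinner : ∀ i : ℕ, (∏ j : Fin n, if i < ((j : Fin n) : ℕ) then
        (u*t^i - t*(u*t^((j : Fin n) : ℕ)))/(u*t^i - u*t^((j : Fin n) : ℕ)) else 1)
      = ∏ j ∈ Finset.range n,
        (if i < j then (u*t^i - t*(u*t^j))/(u*t^i - u*t^j) else 1) := fun i =>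
    Fin.prod_univ_eq_prod_range
      (fun j => if i < j then (u*t^i - t*(u*t^j))/(u*t^i - u*t^j) else 1) n
  have hdp : (∏ i : Fin n, ∏ j : Fin n, if ((i : Fin n) : ℕ) < ((j : Fin n) : ℕ) then
        (u*t^((i : Fin n) : ℕ) - t*(u*t^((j : Fin n) : ℕ)))
          /(u*t^((i : Fin n) : ℕ) - u*t^((j : Fin n) : ℕ)) else 1)
      = vFactor t n := by
    rw [← vprod ht0 ht1 hu n]
    rw [show (∏ i : Fin n, ∏ j : Fin n, if ((i : Fin n) : ℕ) < ((j : Fin n) : ℕ) then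
        (u*t^((i : Fin n) : ℕ) - t*(u*t^((j : Fin n) : ℕ)))
          /(u*t^((i : Fin n) : ℕ) - u*t^((j : Fin n) : ℕ)) else 1)
      = ∏ i : Fin n, ∏ j ∈ Finset.range n,
        (if ((i : Fin n) : ℕ) < j then (u*t^((i : Fin n) : ℕ) - t*(u*t^j))
          /(u*t^((i : Fin n) : ℕ) - u*t^j) else 1) from
        Finset.prod_congr rfl (fun i _ => hinner i)]
    exact Fin.prod_univ_eq_prod_range
      (fun i => ∏ j ∈ Finset.range n,
        (if i < j then (u*t^i - t*(u*t^j))/(u*t^i - u*t^j) else 1)) n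
  -- finprod conversions
  have hc0 : ∀ i ≥ lam 0, conj lam i = 0 := fun i hi => conj_eq_zero hlam i hi
  have hmz : ∀ i ≥ lam 0, conj lam i - conj lam (i+1) = 0 := by
    intro i hi
    rw [hc0 i hi, hc0 (i+1) (by omega)]
  have hfp1 : ∏ᶠ i, vFactor t (conj lam i - conj lam (i + 1))
      = ∏ i ∈ Finset.range (lam 0), vFactor t (conj lam i - conj lam (i+1)) := by
    apply finprod_eq_prod_of_mulSupport_subset
    intro i hi
    simp only [Function.mem_mulSupport] at hi
    simp only [Finset.coe_range, Set.mem_Iio]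
    by_contra h
    rw [hmz i (by omega)] at hi
    exact hi (by simp [vFactor])
  have hfp2 : ∏ᶠ i, qPoch t t (conj lam i - conj lam (i + 1))
      = ∏ i ∈ Finset.range (lam 0), qPoch t t (conj lam i - conj lam (i+1)) := by
    apply finprod_eq_prod_of_mulSupport_subset
    intro i hi
    simp only [Function.mem_mulSupport] at hi
    simp only [Finset.coe_range, Set.mem_Iio]
    by_contra h
    rw [hmz i (by omega)] at hi
    exact hi (by simp [qPoch])
  have hsumM : ∑ i ∈ Finset.range (lam 0), (conj lam i - conj lam (i+1)) = conj lam 0 := by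
    rw [antitone_tel_sum (conj_antitone hlam), hc0 (lam 0) le_rfl, Nat.sub_zero]
  -- value of vlam
  have hPi_pos : (0:ℝ) < ∏ i ∈ Finset.range (lam 0), qPoch t t (conj lam i - conj lam (i+1)) :=
    Finset.prod_pos (fun i _ => qPoch_pos ht0 ht1 _)
  have hP0_pos : (0:ℝ) < qPoch t t (n - conj lam 0) := qPoch_pos ht0 ht1 _
  have hPn_pos : (0:ℝ) < qPoch t t n := qPoch_pos ht0 ht1 _
  have hvlam : vlam n t lam
      = qPoch t t (n - conj lam 0)
        * (∏ i ∈ Finset.range (lam 0), qPoch t t (conj lam i - conj lam (i+1)))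
        / (1-t)^n := by
    rw [vlam, hfp1, vFactor_eq,
      Finset.prod_congr rfl (fun i (_ : i ∈ Finset.range (lam 0)) =>
        vFactor_eq (t := t) (conj lam i - conj lam (i+1))),
      Finset.prod_div_distrib, Finset.prod_pow_eq_pow_sum, hsumM,
      div_mul_div_comm, ← pow_add]
    congr 2
    omega
  rw [hmono, hdp, hvlam, vFactor_eq, hfp2]
  have hx : ((1:ℝ)-t)^n ≠ 0 := (pow_pos h1t n).ne'
  field_simp
end

section
/- Fix a prime p and set t = 1/p. For any two integer partitions λ and ν, the following cancellation identity holds: Σ_{μ ⊆ λ} P_{λ/μ}(t, t², ...; 0, t) · Q_{μ'/ν'}(−t; t, 0) = 1(λ = ν), where Q_{μ'/ν'}(−t; t, 0) is the single-variable skew q-Whittaker function with parameter t. -/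
open Finset

/-- The principally specialized skew Hall-Littlewood symmetric function
`P_{λ/μ}(u, ut, ut², …; 0, t)` (valid for `μ ⊆ λ`), given by its explicit product formula. -/
noncomputable def hlSkewGeom (t u : ℝ) (lam mu : ℕ → ℕ) : ℝ :=
  u ^ (psize lam - psize mu) *
    ∏ᶠ i : ℕ,
      (t ^ Nat.choose (conj lam i - conj mu i) 2 *
        qBinom t (conj lam i - conj mu (i + 1)) (conj lam i - conj mu i) *
        qPoch t t (conj mu i - conj mu (i + 1)) / qPoch t t (conj lam i - conj lam (i + 1)))

open Classical in
/-- The single-variable skew q-Whittaker function `Q_{μ'/ν'}(x; t, 0)`: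
it equals `x^{|μ|−|ν|} (t;t)_{μ'_1−ν'_1}^{-1} Π_{i≥1} [ν'_i − ν'_{i+1} choose ν'_i − μ'_{i+1}]_t`
when the conjugates interlace (`μ' ≻ ν'`), and `0` otherwise. -/
noncomputable def qwQskew1 (t x : ℝ) (mu nu : ℕ → ℕ) : ℝ :=
  if ∀ i, conj nu i ≤ conj mu i ∧ conj mu (i + 1) ≤ conj nu i then
    x ^ (psize mu - psize nu) * (1 / qPoch t t (conj mu 0 - conj nu 0)) *
      ∏ᶠ i : ℕ, qBinom t (conj nu i - conj nu (i + 1)) (conj nu i - conj mu (i + 1))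
  else 0


section AuxProof
set_option linter.unusedSectionVars false
set_option linter.unusedVariables false
set_option maxHeartbeats 1000000

variable {t : ℝ} (ht0 : 0 < t) (ht1 : t < 1)


lemma qPoch_zero (a q : ℝ) : qPoch a q 0 = 1 := by simp [qPoch]
lemma qPoch_succ (a q : ℝ) (n : ℕ) : qPoch a q (n+1) = qPoch a q n * (1 - a * q ^ n) :=
  Finset.prod_range_succ _ _

include ht0 ht1 in
lemma qPoch_pos_s11 (n : ℕ) : 0 < qPoch t t n := by
  induction n with
  | zero => simp [qPoch]
  | succ n ih =>
    rw [qPoch_succ]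
    have h1 : t * t ^ n < 1 := by
      have := pow_lt_one₀ (le_of_lt ht0) ht1 (Nat.succ_ne_zero n)
      simpa [pow_succ, mul_comm] using this
    nlinarith

include ht0 ht1 in
lemma qPoch_ne (n : ℕ) : qPoch t t n ≠ 0 := ne_of_gt (qPoch_pos_s11 ht0 ht1 n)

include ht0 ht1 in
lemma qBinom_zero_right (a : ℕ) : qBinom t a 0 = 1 := by
  simp [qBinom, qPoch_zero, qPoch_ne ht0 ht1 a]

include ht0 ht1 in
lemma qBinom_self (a : ℕ) : qBinom t a a = 1 := by
  simp [qBinom, qPoch_zero, qPoch_ne ht0 ht1 a]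

include ht0 ht1 in
lemma qBinom_pascal' (b c : ℕ) :
    qBinom t (b+1+c+1) (b+1) = t^(b+1) * qBinom t (b+1+c) (b+1) + qBinom t (b+1+c) b := by
  have e1 : b+1+c+1-(b+1) = c+1 := by omega
  have e2 : b+1+c-(b+1) = c := by omega
  have e3 : b+1+c-b = c+1 := by omega
  rw [qBinom, qBinom, qBinom, e1, e2, e3]
  rw [qPoch_succ t t (b+1+c), qPoch_succ t t c, qPoch_succ t t b]
  have n1 := qPoch_ne ht0 ht1 (b+1+c)
  have n2 := qPoch_ne ht0 ht1 c
  have n3 := qPoch_ne ht0 ht1 b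
  have n4 : (1 : ℝ) - t * t ^ c ≠ 0 := by
    intro h
    have h2 := qPoch_pos_s11 ht0 ht1 (c+1)
    rw [qPoch_succ, h, mul_zero] at h2
    exact lt_irrefl _ h2
  have n5 : (1 : ℝ) - t * t ^ b ≠ 0 := by
    intro h
    have h2 := qPoch_pos_s11 ht0 ht1 (b+1)
    rw [qPoch_succ, h, mul_zero] at h2
    exact lt_irrefl _ h2
  field_simp
  ring

include ht0 ht1 in
lemma qBinom_pascal {a r : ℕ} (h1 : 1 ≤ a) (h2 : a ≤ r) :
    qBinom t (r+1) a = t^a * qBinom t r a + qBinom t r (a-1) := by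
  obtain ⟨b, rfl⟩ : ∃ b, a = b + 1 := ⟨a - 1, by omega⟩
  obtain ⟨c, rfl⟩ : ∃ c, r = b + 1 + c := ⟨r - (b+1), by omega⟩
  simpa using qBinom_pascal' ht0 ht1 b c

include ht0 ht1 in
lemma altsum (r : ℕ) :
    ∑ a ∈ range (r+1), (-1:ℝ)^a * t^(a.choose 2) * qBinom t r a
      = if r = 0 then 1 else 0 := by
  cases r with
  | zero => simp [qBinom_self ht0 ht1]
  | succ s =>
    rw [if_neg (Nat.succ_ne_zero s)]
    set V : ℝ := ∑ a ∈ range (s+1), (-1:ℝ)^a * t^((a+1).choose 2) * qBinom t s a with hV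
    have hch : ∀ a : ℕ, ((a+1)+1).choose 2 = (a+1).choose 2 + (a+1) := by
      intro a
      simp [Nat.choose_succ_succ, Nat.choose_one_right]
      omega
    have key : ∀ a ∈ range s,
        (-1:ℝ)^(a+1) * t^((a+1).choose 2) * qBinom t (s+1) (a+1)
          = (-1:ℝ)^(a+1) * t^(((a+1)+1).choose 2) * qBinom t s (a+1)
            + (-((-1:ℝ)^a * t^((a+1).choose 2) * qBinom t s a)) := by
      intro a ha
      rw [mem_range] at ha
      have hp := qBinom_pascal ht0 ht1 (a := a+1) (r := s) (by omega) (by omega)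
      simp only [Nat.add_sub_cancel] at hp
      rw [hp, hch a, pow_add, pow_succ]
      ring
    have expand : ∑ a ∈ range (s+1+1), (-1:ℝ)^a * t^(a.choose 2) * qBinom t (s+1) a
        = (∑ a ∈ range s, (-1:ℝ)^(a+1) * t^((a+1).choose 2) * qBinom t (s+1) (a+1))
          + ((-1:ℝ)^0 * t^((0:ℕ).choose 2) * qBinom t (s+1) 0)
          + (-1:ℝ)^(s+1) * t^((s+1).choose 2) * qBinom t (s+1) (s+1) := by
      rw [Finset.sum_range_succ, Finset.sum_range_succ']
    rw [expand, Finset.sum_congr rfl key, Finset.sum_add_distrib]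
    have hVA : V = (∑ a ∈ range s, (-1:ℝ)^(a+1) * t^((a+1+1).choose 2) * qBinom t s (a+1)) + 1 := by
      rw [hV, Finset.sum_range_succ']
      simp [qBinom_zero_right ht0 ht1]
    have hVB : V = (∑ a ∈ range s, (-1:ℝ)^a * t^((a+1).choose 2) * qBinom t s a)
        + (-1:ℝ)^s * t^((s+1).choose 2) := by
      rw [hV, Finset.sum_range_succ, qBinom_self ht0 ht1, mul_one]
    have hneg : ∑ a ∈ range s, -((-1:ℝ)^a * t^((a+1).choose 2) * qBinom t s a)
        = -∑ a ∈ range s, ((-1:ℝ)^a * t^((a+1).choose 2) * qBinom t s a) := by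
      simp
    rw [qBinom_zero_right ht0 ht1, qBinom_self ht0 ht1, hneg]
    simp only [show Nat.choose 0 2 = 0 from rfl, pow_zero, mul_one, one_mul]
    linear_combination (-1:ℝ) * hVA + hVB

lemma neg_one_pow_sub {a r : ℕ} (h : a ≤ r) : (-1:ℝ)^(r-a) = (-1:ℝ)^r * (-1:ℝ)^a := by
  have : (-1:ℝ)^(r-a) * (-1:ℝ)^a = (-1:ℝ)^r := by
    rw [← pow_add]
    congr 1
    omega
  have ha : ((-1:ℝ)^a) * ((-1:ℝ)^a) = 1 := by
    rw [← pow_add, ← two_mul, pow_mul]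
    norm_num
  calc (-1:ℝ)^(r-a) = (-1:ℝ)^(r-a) * (((-1:ℝ)^a) * ((-1:ℝ)^a)) := by rw [ha, mul_one]
    _ = ((-1:ℝ)^(r-a) * (-1:ℝ)^a) * (-1:ℝ)^a := by ring
    _ = (-1:ℝ)^r * (-1:ℝ)^a := by rw [this]

include ht0 ht1 in
lemma qBinom_symm {a r : ℕ} (h : a ≤ r) : qBinom t r (r - a) = qBinom t r a := by
  rw [qBinom, qBinom]
  have : r - (r - a) = a := by omega
  rw [this, mul_comm]

include ht0 ht1 in
lemma altsum_rev (r : ℕ) :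
    ∑ a ∈ range (r+1), (-1:ℝ)^a * t^((r-a).choose 2) * qBinom t r a
      = if r = 0 then 1 else 0 := by
  rw [← Finset.sum_range_reflect]
  have congr1 : ∀ a ∈ range (r+1),
      (-1:ℝ)^(r+1-1-a) * t^((r-(r+1-1-a)).choose 2) * qBinom t r (r+1-1-a)
        = (-1:ℝ)^r * ((-1:ℝ)^a * t^(a.choose 2) * qBinom t r a) := by
    intro a ha
    rw [mem_range] at ha
    have h1 : r + 1 - 1 - a = r - a := by omega
    have h2 : r - (r - a) = a := by omega
    rw [h1, h2, qBinom_symm ht0 ht1 (by omega), neg_one_pow_sub (by omega)]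
    ring
  rw [Finset.sum_congr rfl congr1, ← Finset.mul_sum, altsum ht0 ht1 r]
  by_cases h : r = 0 <;> simp [h]

include ht0 ht1 in
lemma colsum (l n b : ℕ) (hb : b ≤ n) :
    ∑ m ∈ range (l+1), (if n ≤ m then
        (-1:ℝ)^(m-n) * t^((l-m).choose 2) * qBinom t (l-b) (l-m)
          * qPoch t t (m-b) / qPoch t t (m-n) else 0)
      = if l = n then qPoch t t (n-b) else 0 := by
  by_cases hnl : n ≤ l
  · -- filter to Ico n (l+1)
    rw [← Finset.sum_filter]
    have hfil : (range (l+1)).filter (fun m => n ≤ m) = Finset.Ico n (l+1) := by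
      ext m
      simp [mem_filter, mem_range, Finset.mem_Ico]
      omega
    rw [hfil, Finset.sum_Ico_eq_sum_range]
    have hlen : l + 1 - n = (l - n) + 1 := by omega
    rw [hlen]
    have congr2 : ∀ a ∈ range ((l-n)+1),
        (-1:ℝ)^(n+a-n) * t^((l-(n+a)).choose 2) * qBinom t (l-b) (l-(n+a))
          * qPoch t t (n+a-b) / qPoch t t (n+a-n)
        = (qPoch t t (l-b) / qPoch t t (l-n)) *
            ((-1:ℝ)^a * t^(((l-n)-a).choose 2) * qBinom t (l-n) a) := by
      intro a ha
      rw [mem_range] at ha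
      have ha' : a ≤ l - n := by omega
      have e1 : n + a - n = a := by omega
      have e2 : l - (n + a) = (l - n) - a := by omega
      rw [e1, e2, qBinom, qBinom]
      have e3 : (l - b) - ((l-n) - a) = n + a - b := by omega
      have e4 : (l - n) - ((l - n) - a) = a := by omega
      rw [e3]
      have p1 := qPoch_ne ht0 ht1 ((l-n) - a)
      have p2 := qPoch_ne ht0 ht1 (n + a - b)
      have p3 := qPoch_ne ht0 ht1 a
      have p4 := qPoch_ne ht0 ht1 (l - n)
      field_simp
    rw [Finset.sum_congr rfl congr2, ← Finset.mul_sum, altsum_rev ht0 ht1 (l-n)]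
    by_cases hln : l = n
    · have : l - n = 0 := by omega
      have e : l - b = n - b := by omega
      have q0 : qPoch t t 0 = 1 := by simp [qPoch]
      rw [if_pos this, if_pos hln, mul_one, this, e, q0, div_one]
    · have : ¬ (l - n = 0) := by omega
      rw [if_neg this, if_neg hln, mul_zero]
  · -- n > l : all terms vanish
    have : ∀ m ∈ range (l+1), (if n ≤ m then
        (-1:ℝ)^(m-n) * t^((l-m).choose 2) * qBinom t (l-b) (l-m)
          * qPoch t t (m-b) / qPoch t t (m-n) else 0) = 0 := by
      intro m hm
      rw [mem_range] at hm
      rw [if_neg (by omega)]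
    rw [Finset.sum_congr rfl this, Finset.sum_const_zero, if_neg (by omega)]

def conz (m : ℕ) (f : ℕ → ℕ) : ℕ → ℕ
  | 0 => m
  | (j+1) => f j

open Classical in
noncomputable def Wt (t : ℝ) (K : ℕ) (L N M : ℕ → ℕ) : ℝ :=
  if ∀ i, M i ≤ L i ∧ N i ≤ M i ∧ M (i+1) ≤ N i then
    (-1:ℝ)^(∑ i ∈ range K, (M i - N i)) * t^(∑ i ∈ range K, (L i - N i)) *
    (1 / qPoch t t (M 0 - N 0)) *
    ∏ i ∈ range K, (t^((L i - M i).choose 2) * qBinom t (L i - M (i+1)) (L i - M i) *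
      qPoch t t (M i - M (i+1)) * qBinom t (N i - N (i+1)) (N i - M (i+1)) / qPoch t t (L i - L (i+1)))
  else 0

open Classical in
noncomputable def tupleSet : ℕ → (ℕ → ℕ) → Finset (ℕ → ℕ)
  | 0, _ => {fun _ => 0}
  | (K+1), L => ((range (L 0 + 1)) ×ˢ tupleSet K (fun i => L (i+1))).image (fun p => conz p.1 p.2)

lemma conz_zero (m : ℕ) (f : ℕ → ℕ) : conz m f 0 = m := rfl
lemma conz_succ (m : ℕ) (f : ℕ → ℕ) (j : ℕ) : conz m f (j+1) = f j := rfl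

lemma sum_tupleSet_succ (K : ℕ) (L : ℕ → ℕ) (F : (ℕ → ℕ) → ℝ) :
    ∑ M ∈ tupleSet (K+1) L, F M
      = ∑ M' ∈ tupleSet K (fun i => L (i+1)), ∑ m ∈ range (L 0 + 1), F (conz m M') := by
  classical
  rw [tupleSet]
  rw [Finset.sum_image]
  · rw [Finset.sum_product_right]
  · intro p1 h1 p2 h2 h
    have h0 : p1.1 = p2.1 := congrFun h 0
    have hs : p1.2 = p2.2 := funext fun j => congrFun h (j+1)
    exact Prod.ext h0 hs

lemma mem_tupleSet {K : ℕ} {L M : ℕ → ℕ} :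
    M ∈ tupleSet K L ↔ (∀ i, i < K → M i ≤ L i) ∧ (∀ i, K ≤ i → M i = 0) := by
  classical
  induction K generalizing L M with
  | zero =>
    simp only [tupleSet, Finset.mem_singleton]
    constructor
    · rintro rfl
      exact ⟨fun i h => absurd h (Nat.not_lt_zero i), fun i _ => rfl⟩
    · intro ⟨_, h⟩
      exact funext fun i => h i (Nat.zero_le i)
  | succ K ih =>
    simp only [tupleSet, Finset.mem_image, Finset.mem_product, Finset.mem_range]
    constructor
    · rintro ⟨⟨m, M'⟩, ⟨hm, hM'⟩, rfl⟩
      obtain ⟨h1, h2⟩ := ih.mp hM'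
      constructor
      · intro i hi
        cases i with
        | zero => simpa [conz_zero] using Nat.lt_succ_iff.mp hm
        | succ j => exact h1 j (by omega)
      · intro i hi
        cases i with
        | zero => omega
        | succ j => exact h2 j (by omega)
    · intro ⟨h1, h2⟩
      refine ⟨(M 0, fun j => M (j+1)), ⟨by simpa using Nat.lt_succ_iff.mpr (h1 0 (Nat.succ_pos K)), ?_⟩, ?_⟩
      · exact ih.mpr ⟨fun i hi => h1 (i+1) (by omega), fun i hi => h2 (i+1) (by omega)⟩
      · exact funext fun i => by cases i <;> rfl

include ht0 ht1 in
open Classical in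
lemma core : ∀ K (L N : ℕ → ℕ), Antitone L → (∀ i, K ≤ i → L i = 0) → (∀ i, K ≤ i → N i = 0) →
    ∑ M ∈ tupleSet K L, Wt t K L N M = if L = N then 1 else 0 := by
  intro K
  induction K with
  | zero =>
    intro L N hL hLK hNK
    have hL0 : L = fun _ => 0 := funext fun i => hLK i (Nat.zero_le i)
    have hN0 : N = fun _ => 0 := funext fun i => hNK i (Nat.zero_le i)
    subst hL0; subst hN0
    rw [if_pos rfl]
    show ∑ M ∈ ({fun _ => 0} : Finset (ℕ → ℕ)), Wt t 0 _ _ M = 1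
    rw [Finset.sum_singleton, Wt, if_pos (by intro i; exact ⟨le_refl 0, le_refl 0, le_refl 0⟩)]
    simp [qPoch]
  | succ K ih =>
    intro L N hL hLK hNK
    rw [sum_tupleSet_succ]
    have hL' : Antitone (fun i => L (i+1)) := fun i j h => hL (by omega)
    have inner : ∀ M' ∈ tupleSet K (fun i => L (i+1)),
        ∑ m ∈ range (L 0 + 1), Wt t (K+1) L N (conz m M')
          = (if L 0 = N 0 then qPoch t t (N 0 - N 1) / qPoch t t (L 0 - L 1) else 0)
            * Wt t K (fun i => L (i+1)) (fun i => N (i+1)) M' := by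
      intro M' hM'
      by_cases hg : ∀ i, M' i ≤ L (i+1) ∧ N (i+1) ≤ M' i ∧ M' (i+1) ≤ N (i+1)
      · -- shifted guard holds
        have hb1 : N 1 ≤ M' 0 := (hg 0).2.1
        have hbL : M' 0 ≤ L 1 := (hg 0).1
        by_cases hb0 : M' 0 ≤ N 0
        · -- main case
          have term_eq : ∀ m ∈ range (L 0 + 1),
              Wt t (K+1) L N (conz m M')
                = ((if N 0 ≤ m then
                    (-1:ℝ)^(m - N 0) * t^((L 0 - m).choose 2) * qBinom t (L 0 - M' 0) (L 0 - m)
                      * qPoch t t (m - M' 0) / qPoch t t (m - N 0) else 0)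
                  * (t^(L 0 - N 0) * qBinom t (N 0 - N 1) (N 0 - M' 0) * qPoch t t (M' 0 - N 1)
                      / qPoch t t (L 0 - L 1)))
                  * Wt t K (fun i => L (i+1)) (fun i => N (i+1)) M' := by
            intro m hm
            rw [mem_range] at hm
            by_cases hNm : N 0 ≤ m
            · -- guard of the big Wt holds
              have hguard : ∀ i, conz m M' i ≤ L i ∧ N i ≤ conz m M' i ∧ conz m M' (i+1) ≤ N i := by
                intro i
                cases i with
                | zero => exact ⟨by simpa [conz_zero] using Nat.lt_succ_iff.mp hm,
                    by simpa [conz_zero] using hNm, by simpa [conz_succ] using hb0⟩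
                | succ j => exact ⟨by simpa [conz_succ] using (hg j).1,
                    by simpa [conz_succ] using (hg j).2.1, by simpa [conz_succ] using (hg j).2.2⟩
              rw [Wt, if_pos hguard, Wt, if_pos hg, if_pos hNm]
              rw [Finset.sum_range_succ' (fun i => conz m M' i - N i) K]
              rw [Finset.sum_range_succ' (fun i => L i - N i) K]
              rw [Finset.prod_range_succ' (fun i =>
                t^((L i - conz m M' i).choose 2) * qBinom t (L i - conz m M' (i+1)) (L i - conz m M' i) *
                qPoch t t (conz m M' i - conz m M' (i+1)) * qBinom t (N i - N (i+1)) (N i - conz m M' (i+1)) / qPoch t t (L i - L (i+1))) K]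
              simp only [conz_zero, conz_succ]
              rw [pow_add, pow_add]
              have hP1 := qPoch_ne ht0 ht1 (m - N 0)
              have hP2 := qPoch_ne ht0 ht1 (M' 0 - N 1)
              have hP3 := qPoch_ne ht0 ht1 (L 0 - L 1)
              have hProd : (∏ x ∈ range K, qPoch t t (L (x+1) - L (x+1+1))) ≠ 0 :=
                Finset.prod_ne_zero_iff.mpr (fun x _ => qPoch_ne ht0 ht1 _)
              field_simp
            · -- N 0 ≤ m fails: big guard fails
              have hgf : ¬ (∀ i, conz m M' i ≤ L i ∧ N i ≤ conz m M' i ∧ conz m M' (i+1) ≤ N i) := by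
                intro h
                exact hNm (by simpa [conz_zero] using (h 0).2.1)
              rw [Wt, if_neg hgf, if_neg hNm]
              ring
          rw [Finset.sum_congr rfl term_eq]
          rw [← Finset.sum_mul, ← Finset.sum_mul]
          rw [colsum ht0 ht1 (L 0) (N 0) (M' 0) hb0]
          by_cases hLN0 : L 0 = N 0
          · rw [if_pos hLN0, if_pos hLN0]
            have e0 : L 0 - N 0 = 0 := by omega
            rw [e0, pow_zero]
            have eB : qBinom t (N 0 - N 1) (N 0 - M' 0)
                = qPoch t t (N 0 - N 1) / (qPoch t t (N 0 - M' 0) * qPoch t t (M' 0 - N 1)) := by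
              rw [qBinom, show (N 0 - N 1) - (N 0 - M' 0) = M' 0 - N 1 from by omega]
            rw [eB]
            have hP1 := qPoch_ne ht0 ht1 (N 0 - M' 0)
            have hP2 := qPoch_ne ht0 ht1 (M' 0 - N 1)
            have hP3 := qPoch_ne ht0 ht1 (L 0 - L 1)
            field_simp
          · rw [if_neg hLN0, if_neg hLN0]
            simp
        · -- M' 0 > N 0 : L 0 ≠ N 0 and all terms vanish
          have hvanish : ∀ m ∈ range (L 0 + 1), Wt t (K+1) L N (conz m M') = 0 := by
            intro m hm
            rw [Wt, if_neg]
            intro h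
            exact hb0 (by simpa [conz_succ] using (h 0).2.2)
          rw [Finset.sum_congr rfl hvanish, Finset.sum_const_zero]
          have hLN0 : L 0 ≠ N 0 := by
            intro h
            exact hb0 (le_trans hbL (le_trans (hL (Nat.zero_le 1)) (le_of_eq h)))
          rw [if_neg hLN0, zero_mul]
      · -- shifted guard fails : Wt' = 0 and all big guards fail
        have hW' : Wt t K (fun i => L (i+1)) (fun i => N (i+1)) M' = 0 := by
          rw [Wt, if_neg hg]
        rw [hW', mul_zero]
        have hall : ∀ m ∈ range (L 0 + 1), Wt t (K+1) L N (conz m M') = 0 := by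
          intro m hm
          rw [Wt, if_neg]
          intro h
          apply hg
          intro i
          exact ⟨by simpa [conz_succ] using (h (i+1)).1,
            by simpa [conz_succ] using (h (i+1)).2.1,
            by simpa [conz_succ] using (h (i+1)).2.2⟩
        rw [Finset.sum_congr rfl hall, Finset.sum_const_zero]
    rw [Finset.sum_congr rfl inner, ← Finset.mul_sum]
    rw [ih (fun i => L (i+1)) (fun i => N (i+1)) hL' (fun i hi => hLK (i+1) (by omega))
      (fun i hi => hNK (i+1) (by omega))]
    by_cases h1 : L 0 = N 0
    · by_cases h2 : (fun i => L (i+1)) = (fun i => N (i+1))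
      · have hLN : L = N := by
          funext i
          cases i with
          | zero => exact h1
          | succ j => exact congrFun h2 j
        rw [if_pos h2, if_pos h1, if_pos hLN, mul_one]
        have e1 : L 1 = N 1 := congrFun h2 0
        rw [show L 0 - L 1 = N 0 - N 1 by omega]
        exact div_self (qPoch_ne ht0 ht1 _)
      · have hLN : L ≠ N := fun h => h2 (funext fun i => congrFun h (i+1))
        rw [if_neg h2, if_neg hLN, mul_zero]
    · have hLN : L ≠ N := fun h => h1 (congrFun h 0)
      rw [if_neg hLN, if_neg h1, zero_mul]


lemma conj_eq_card {f : ℕ → ℕ} {B : ℕ} (hB : ∀ j, B ≤ j → f j = 0) (i : ℕ) :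
    conj f i = ((range B).filter (fun j => i + 1 ≤ f j)).card := by
  have hset : {j : ℕ | i + 1 ≤ f j} = ↑((range B).filter (fun j => i + 1 ≤ f j)) := by
    ext j
    simp only [Set.mem_setOf_eq, coe_filter, mem_range, Set.mem_setOf_eq]
    constructor
    · intro h
      refine ⟨?_, h⟩
      by_contra hj
      rw [hB j (by omega)] at h
      omega
    · exact fun h => h.2
  rw [conj, hset, Nat.card_coe_set_eq, Set.ncard_coe_finset]

lemma conj_le_conj {f g : ℕ → ℕ} {B : ℕ} (hB : ∀ j, B ≤ j → g j = 0)
    (hfg : ∀ j, f j ≤ g j) (i : ℕ) : conj f i ≤ conj g i := by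
  have hBf : ∀ j, B ≤ j → f j = 0 := fun j hj => by
    have := hfg j; rw [hB j hj] at this; omega
  rw [conj_eq_card hBf i, conj_eq_card hB i]
  apply Finset.card_le_card
  intro j hj
  rw [mem_filter] at hj ⊢
  exact ⟨hj.1, le_trans hj.2 (hfg j)⟩

lemma conj_lt_iff {f : ℕ → ℕ} {B : ℕ} (hf : Antitone f) (hB : ∀ j, B ≤ j → f j = 0)
    (i j : ℕ) : j < conj f i ↔ i + 1 ≤ f j := by
  rw [conj_eq_card hB i]
  constructor
  · intro h
    by_contra hfj
    push_neg at hfj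
    have hsub : (range B).filter (fun j => i + 1 ≤ f j) ⊆ range j := by
      intro k hk
      rw [mem_filter] at hk
      rw [mem_range]
      by_contra hkj
      push_neg at hkj
      have := hf hkj
      omega
    have := Finset.card_le_card hsub
    rw [Finset.card_range] at this
    omega
  · intro hfj
    have hjB : j < B := by
      by_contra hjB
      push_neg at hjB
      rw [hB j hjB] at hfj
      omega
    have hsub : range (j+1) ⊆ (range B).filter (fun j => i + 1 ≤ f j) := by
      intro k hk
      rw [mem_range] at hk
      rw [mem_filter, mem_range]
      have : f j ≤ f k := hf (by omega)
      exact ⟨by omega, by omega⟩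
    have := Finset.card_le_card hsub
    rw [Finset.card_range] at this
    omega

lemma conj_antitone_s11 {f : ℕ → ℕ} {B : ℕ} (hB : ∀ j, B ≤ j → f j = 0) : Antitone (conj f) := by
  intro i j hij
  rw [conj_eq_card hB i, conj_eq_card hB j]
  apply Finset.card_le_card
  intro k hk
  rw [mem_filter] at hk ⊢
  exact ⟨hk.1, by omega⟩

lemma conj_eq_zero_s11 {f : ℕ → ℕ} (hf : Antitone f) {i : ℕ} (hi : f 0 ≤ i) : conj f i = 0 := by
  have : {j : ℕ | i + 1 ≤ f j} = ∅ := by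
    ext j
    simp only [Set.mem_setOf_eq, Set.mem_empty_iff_false, iff_false]
    have := hf (Nat.zero_le j)
    omega
  rw [conj, this]
  simp

lemma conj_conj {f : ℕ → ℕ} {B : ℕ} (hf : Antitone f) (hB : ∀ j, B ≤ j → f j = 0) :
    conj (conj f) = f := by
  funext j
  have hset : {i : ℕ | j + 1 ≤ conj f i} = ↑(range (f j)) := by
    ext i
    simp only [Set.mem_setOf_eq, coe_range, Set.mem_Iio]
    rw [show (j + 1 ≤ conj f i) ↔ (j < conj f i) from Iff.rfl, conj_lt_iff hf hB]
    omega
  rw [conj, hset, Nat.card_coe_set_eq, Set.ncard_coe_finset, Finset.card_range]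

lemma psize_eq_sum {f : ℕ → ℕ} {B : ℕ} (hB : ∀ j, B ≤ j → f j = 0) :
    psize f = ∑ j ∈ range B, f j := by
  rw [psize]
  apply finsum_eq_sum_of_support_subset
  intro j hj
  simp only [Function.mem_support] at hj
  rw [coe_range, Set.mem_Iio]
  by_contra h
  exact hj (hB j (by omega))

lemma sum_conj {f : ℕ → ℕ} {B K : ℕ} (hf : Antitone f) (hB : ∀ j, B ≤ j → f j = 0)
    (hK : f 0 ≤ K) : ∑ i ∈ range K, conj f i = psize f := by
  have step1 : ∀ i, conj f i = ∑ j ∈ range B, (if i + 1 ≤ f j then 1 else 0) := by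
    intro i
    rw [conj_eq_card hB i, Finset.card_filter]
  rw [Finset.sum_congr rfl (fun i _ => step1 i), Finset.sum_comm]
  rw [psize_eq_sum hB]
  apply Finset.sum_congr rfl
  intro j hj
  have : ∀ i ∈ range K, (if i + 1 ≤ f j then (1:ℕ) else 0) = if i < f j then 1 else 0 := by
    intro i _
    congr 1
  rw [Finset.sum_congr rfl this, ← Finset.card_filter]
  have : (range K).filter (fun i => i < f j) = range (f j) := by
    ext i
    simp only [mem_filter, mem_range]
    have : f j ≤ f 0 := hf (Nat.zero_le j)
    omega
  rw [this, Finset.card_range]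

lemma sum_sub_nat {s : Finset ℕ} {f g : ℕ → ℕ} (h : ∀ i ∈ s, g i ≤ f i) :
    ∑ i ∈ s, (f i - g i) = ∑ i ∈ s, f i - ∑ i ∈ s, g i := by
  have h1 : ∑ i ∈ s, (f i - g i) + ∑ i ∈ s, g i = ∑ i ∈ s, f i := by
    rw [← Finset.sum_add_distrib]
    exact Finset.sum_congr rfl (fun i hi => by have := h i hi; omega)
  omega

lemma qBinom00 {t : ℝ} : qBinom t 0 0 = 1 := by simp [qBinom, qPoch]
lemma qPoch0 {t : ℝ} : qPoch t t 0 = 1 := by simp [qPoch]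

lemma bridge {t : ℝ} (ht0 : 0 < t) (ht1 : t < 1) (lam nu mu : ℕ → ℕ) (B K : ℕ)
    (hlam : Antitone lam) (hnu : Antitone nu) (hmu : Antitone mu)
    (hmule : ∀ i, mu i ≤ lam i)
    (hBlam : ∀ j, B ≤ j → lam j = 0) (hBnu : ∀ j, B ≤ j → nu j = 0)
    (hKlam : lam 0 ≤ K) (hKnu : nu 0 ≤ K) :
    hlSkewGeom t t lam mu * qwQskew1 t (-t) mu nu = Wt t K (conj lam) (conj nu) (conj mu) := by
  have hBmu : ∀ j, B ≤ j → mu j = 0 := fun j hj => by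
    have := hmule j; rw [hBlam j hj] at this; omega
  have hML : ∀ i, conj mu i ≤ conj lam i := conj_le_conj hBlam hmule
  have hKmu : mu 0 ≤ K := le_trans (hmule 0) hKlam
  have hLz : ∀ i, K ≤ i → conj lam i = 0 := fun i hi => conj_eq_zero_s11 hlam (le_trans hKlam hi)
  have hNz : ∀ i, K ≤ i → conj nu i = 0 := fun i hi => conj_eq_zero_s11 hnu (le_trans hKnu hi)
  have hMz : ∀ i, K ≤ i → conj mu i = 0 := fun i hi => conj_eq_zero_s11 hmu (le_trans hKmu hi)
  by_cases hg : ∀ i, conj nu i ≤ conj mu i ∧ conj mu (i + 1) ≤ conj nu i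
  · have hguard : ∀ i, conj mu i ≤ conj lam i ∧ conj nu i ≤ conj mu i ∧
        conj mu (i+1) ≤ conj nu i := fun i => ⟨hML i, (hg i).1, (hg i).2⟩
    rw [hlSkewGeom, qwQskew1, if_pos hg, Wt, if_pos hguard]
    -- finprod to finite products
    have hfp : (∏ᶠ i : ℕ, (t ^ Nat.choose (conj lam i - conj mu i) 2 *
          qBinom t (conj lam i - conj mu (i + 1)) (conj lam i - conj mu i) *
          qPoch t t (conj mu i - conj mu (i + 1)) / qPoch t t (conj lam i - conj lam (i + 1))))
        = ∏ i ∈ range K, (t ^ Nat.choose (conj lam i - conj mu i) 2 *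
          qBinom t (conj lam i - conj mu (i + 1)) (conj lam i - conj mu i) *
          qPoch t t (conj mu i - conj mu (i + 1)) / qPoch t t (conj lam i - conj lam (i + 1))) := by
      apply finprod_eq_prod_of_mulSupport_subset
      intro i hi
      rw [coe_range, Set.mem_Iio]
      by_contra h
      push_neg at h
      have hone : (t ^ Nat.choose (conj lam i - conj mu i) 2 *
          qBinom t (conj lam i - conj mu (i + 1)) (conj lam i - conj mu i) *
          qPoch t t (conj mu i - conj mu (i + 1)) / qPoch t t (conj lam i - conj lam (i + 1))) = 1 := by
        rw [hLz i h, hLz (i+1) (by omega), hMz i h, hMz (i+1) (by omega)]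
        simp [qBinom00, qPoch0]
      exact hi hone
    have hgp : (∏ᶠ i : ℕ, qBinom t (conj nu i - conj nu (i + 1)) (conj nu i - conj mu (i + 1)))
        = ∏ i ∈ range K, qBinom t (conj nu i - conj nu (i + 1)) (conj nu i - conj mu (i + 1)) := by
      apply finprod_eq_prod_of_mulSupport_subset
      intro i hi
      rw [coe_range, Set.mem_Iio]
      by_contra h
      push_neg at h
      have h1 : conj mu (i+1) = 0 := by
        have h2 := (hg i).2
        have h3 := hNz i h
        omega
      have hone : qBinom t (conj nu i - conj nu (i+1)) (conj nu i - conj mu (i+1)) = 1 := by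
        rw [hNz i h, hNz (i+1) (by omega), h1]
        exact qBinom00
      exact hi hone
    rw [hfp, hgp]
    -- sums
    have hpl := sum_conj hlam hBlam hKlam
    have hpn := sum_conj hnu hBnu hKnu
    have hpm := sum_conj hmu hBmu hKmu
    have hE2 : ∑ i ∈ range K, (conj mu i - conj nu i) = psize mu - psize nu := by
      rw [sum_sub_nat (fun i _ => (hg i).1), hpm, hpn]
    have hE1 : ∑ i ∈ range K, (conj lam i - conj nu i)
        = (psize lam - psize mu) + (psize mu - psize nu) := by
      rw [sum_sub_nat (fun i _ => le_trans (hg i).1 (hML i)), hpl, hpn]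
      have h1 : psize mu ≤ psize lam := by
        rw [← hpm, ← hpl]; exact Finset.sum_le_sum (fun i _ => hML i)
      have h2 : psize nu ≤ psize mu := by
        rw [← hpn, ← hpm]; exact Finset.sum_le_sum (fun i _ => (hg i).1)
      omega
    have hprodmerge : (∏ i ∈ range K, (t^((conj lam i - conj mu i).choose 2) *
          qBinom t (conj lam i - conj mu (i+1)) (conj lam i - conj mu i) *
          qPoch t t (conj mu i - conj mu (i+1)) *
          qBinom t (conj nu i - conj nu (i+1)) (conj nu i - conj mu (i+1))
          / qPoch t t (conj lam i - conj lam (i+1))))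
        = (∏ i ∈ range K, (t ^ Nat.choose (conj lam i - conj mu i) 2 *
            qBinom t (conj lam i - conj mu (i + 1)) (conj lam i - conj mu i) *
            qPoch t t (conj mu i - conj mu (i + 1)) / qPoch t t (conj lam i - conj lam (i + 1))))
          * ∏ i ∈ range K, qBinom t (conj nu i - conj nu (i + 1)) (conj nu i - conj mu (i + 1)) := by
      rw [← Finset.prod_mul_distrib]
      exact Finset.prod_congr rfl (fun i _ => by ring)
    rw [hE2, hE1, hprodmerge, pow_add, neg_pow]
    ring
  · rw [qwQskew1, if_neg hg, mul_zero, Wt, if_neg]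
    intro h
    exact hg (fun i => ⟨(h i).2.1, (h i).2.2⟩)


end AuxProof

open Classical in
/-- the cancellation identity
`Σ_{μ ⊆ λ} P_{λ/μ}(t, t², …; 0, t) · Q_{μ'/ν'}(−t; t, 0) = 1(λ = ν)` at `t = 1/p`. -/
theorem hl_qw_cancellation (p : ℕ) (hp : p.Prime) (t : ℝ) (ht : t = (p : ℝ)⁻¹)
    (lam nu : ℕ → ℕ) (hlam : IsPartition lam) (hnu : IsPartition nu) :
    (∑ᶠ mu : {g : ℕ → ℕ // Antitone g ∧ ∀ i, g i ≤ lam i},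
        hlSkewGeom t t lam mu.1 * qwQskew1 t (-t) mu.1 nu) =
      if lam = nu then 1 else 0 := by
  obtain ⟨hlamA, Bl, hBl⟩ := hlam
  obtain ⟨hnuA, Bn, hBn⟩ := hnu
  have hp2 : 2 ≤ p := hp.two_le
  have ht0 : 0 < t := by
    rw [ht]; positivity
  have ht1 : t < 1 := by
    rw [ht]
    rw [inv_lt_one_iff₀]
    right
    exact_mod_cast by omega
  set B := max Bl Bn with hB
  have hBlam : ∀ j, B ≤ j → lam j = 0 := fun j hj => hBl j (le_trans (le_max_left _ _) hj)
  have hBnu : ∀ j, B ≤ j → nu j = 0 := fun j hj => hBn j (le_trans (le_max_right _ _) hj)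
  set K := max (lam 0) (nu 0) with hK
  have hKlam : lam 0 ≤ K := le_max_left _ _
  have hKnu : nu 0 ≤ K := le_max_right _ _
  -- step 1 : finsum over subtype to finset sum
  set FA : Finset (ℕ → ℕ) := (tupleSet B lam).filter (fun g => Antitone g) with hFA
  have hsetEq : {g : ℕ → ℕ | Antitone g ∧ ∀ i, g i ≤ lam i} = ↑FA := by
    ext g
    simp only [Set.mem_setOf_eq, hFA, coe_filter, mem_coe, Set.mem_setOf_eq, mem_filter]
    constructor
    · intro ⟨h1, h2⟩
      refine ⟨mem_tupleSet.mpr ⟨fun i _ => h2 i, fun i hi => ?_⟩, h1⟩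
      have := h2 i
      rw [hBlam i hi] at this
      omega
    · intro ⟨h1, h2⟩
      obtain ⟨h3, h4⟩ := mem_tupleSet.mp h1
      refine ⟨h2, fun i => ?_⟩
      by_cases hi : i < B
      · exact h3 i hi
      · rw [h4 i (by omega)]
        omega
  have hmem : ∀ g : ℕ → ℕ, (Antitone g ∧ ∀ i, g i ≤ lam i) = (g ∈ FA) := by
    intro g
    apply propext
    have := Set.ext_iff.mp hsetEq g
    simpa using this
  have step1 : (∑ᶠ mu : {g : ℕ → ℕ // Antitone g ∧ ∀ i, g i ≤ lam i},
        hlSkewGeom t t lam mu.1 * qwQskew1 t (-t) mu.1 nu)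
      = ∑ g ∈ FA, hlSkewGeom t t lam g * qwQskew1 t (-t) g nu := by
    refine Eq.trans (finsum_subtype_eq_finsum_cond
      (f := fun g => hlSkewGeom t t lam g * qwQskew1 t (-t) g nu)
      (fun g => Antitone g ∧ ∀ i, g i ≤ lam i)) ?_
    simp only [hmem]
    exact finsum_mem_finset_eq_sum _ _
  rw [step1]
  -- step 2 : transport along conj to the tuple world
  have step2 : ∑ g ∈ FA, hlSkewGeom t t lam g * qwQskew1 t (-t) g nu
      = ∑ M ∈ (tupleSet K (conj lam)).filter (fun M => Antitone M),
          Wt t K (conj lam) (conj nu) M := by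
    apply Finset.sum_bij' (i := fun g _ => conj g) (j := fun M _ => conj M)
    · -- hi : maps into
      intro g hg
      rw [hFA, mem_filter] at hg
      obtain ⟨hgt, hganti⟩ := hg
      obtain ⟨h3, h4⟩ := mem_tupleSet.mp hgt
      have hgle : ∀ i, g i ≤ lam i := by
        intro i
        by_cases hi : i < B
        · exact h3 i hi
        · rw [h4 i (by omega)]; omega
      rw [mem_filter]
      constructor
      · exact mem_tupleSet.mpr ⟨fun i _ => conj_le_conj hBlam hgle i,
          fun i hi => conj_eq_zero_s11 hganti (le_trans (le_trans (hgle 0) hKlam) hi)⟩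
      · have hBg : ∀ j, B ≤ j → g j = 0 := fun j hj => by
          have := hgle j; rw [hBlam j hj] at this; omega
        exact conj_antitone_s11 hBg
    · -- hj
      intro M hM
      rw [mem_filter] at hM
      obtain ⟨hMt, hManti⟩ := hM
      obtain ⟨h3, h4⟩ := mem_tupleSet.mp hMt
      have hMle : ∀ i, M i ≤ conj lam i := by
        intro i
        by_cases hi : i < K
        · exact h3 i hi
        · rw [h4 i (by omega)]; omega
      have hLz : ∀ i, K ≤ i → conj lam i = 0 := fun i hi =>
        conj_eq_zero_s11 hlamA (le_trans hKlam hi)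
      have hcle : ∀ j, conj M j ≤ lam j := by
        intro j
        have := conj_le_conj hLz hMle j
        rwa [conj_conj hlamA hBlam] at this
      rw [hFA, mem_filter]
      constructor
      · exact mem_tupleSet.mpr ⟨fun i _ => hcle i, fun i hi => by
          have := hcle i; rw [hBlam i hi] at this; omega⟩
      · exact conj_antitone_s11 (f := M) (B := K) h4
    · -- left inv
      intro g hg
      rw [hFA, mem_filter] at hg
      obtain ⟨hgt, hganti⟩ := hg
      obtain ⟨h3, h4⟩ := mem_tupleSet.mp hgt
      exact conj_conj hganti h4
    · -- right inv
      intro M hM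
      rw [mem_filter] at hM
      exact conj_conj hM.2 (mem_tupleSet.mp hM.1).2
    · -- values
      intro g hg
      rw [hFA, mem_filter] at hg
      obtain ⟨hgt, hganti⟩ := hg
      obtain ⟨h3, h4⟩ := mem_tupleSet.mp hgt
      have hgle : ∀ i, g i ≤ lam i := by
        intro i
        by_cases hi : i < B
        · exact h3 i hi
        · rw [h4 i (by omega)]; omega
      exact bridge ht0 ht1 lam nu g B K hlamA hnuA hganti hgle hBlam hBnu hKlam hKnu
  rw [step2]
  -- step 3 : drop the Antitone filter
  have step3 : ∑ M ∈ (tupleSet K (conj lam)).filter (fun M => Antitone M),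
        Wt t K (conj lam) (conj nu) M
      = ∑ M ∈ tupleSet K (conj lam), Wt t K (conj lam) (conj nu) M := by
    apply Finset.sum_filter_of_ne
    intro M _ hW
    rw [Wt] at hW
    by_cases hgu : ∀ i, M i ≤ conj lam i ∧ conj nu i ≤ M i ∧ M (i+1) ≤ conj nu i
    · apply antitone_nat_of_succ_le
      intro i
      exact le_trans (hgu i).2.2 (hgu i).2.1
    · rw [if_neg hgu] at hW
      exact absurd rfl hW
  rw [step3]
  -- step 4 : core identity
  rw [core ht0 ht1 K (conj lam) (conj nu)
    (conj_antitone_s11 hBlam)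
    (fun i hi => conj_eq_zero_s11 hlamA (le_trans hKlam hi))
    (fun i hi => conj_eq_zero_s11 hnuA (le_trans hKnu hi))]
  -- step 5 : identify the indicators
  have hiff : conj lam = conj nu ↔ lam = nu := by
    constructor
    · intro h
      have := conj_conj hlamA hBlam
      rw [← this, h, conj_conj hnuA hBnu]
    · intro h
      rw [h]
  by_cases h : lam = nu
  · rw [if_pos (hiff.mpr h), if_pos h]
  · rw [if_neg (fun hc => h (hiff.mp hc)), if_neg h]
end
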